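/- arXiv:2003.13237 — 3 statements merged into one kernel-verified Lean document; each statement's English description precedes it below -/
import Mathlib

section
/- For every connected graph G with at least two edges, rd(G) ≤ rvd(L(G)), where L(G) is the line graph of G. -/
open SimpleGraph

namespace RD

variable {V : Type*}

/-- `C` is a `u`-`v`-edge-cut of `G`. -/
def IsEdgeCut (G : SimpleGraph V) (C : Finset (Sym2 V)) (u v : V) : Prop :=
  ↑C ⊆ G.edgeSet ∧ ¬ (G.deleteEdges ↑C).Reachable u v

/-- The local edge-connectivity `λ(u,v)`. -/
noncomputable def lam (G : SimpleGraph V) (u v : V) : ℕ :=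
  sInf {n | ∃ C : Finset (Sym2 V), IsEdgeCut G C u v ∧ C.card = n}

/-- The edge-connectivity `λ(G)`. -/
noncomputable def edgeConn (G : SimpleGraph V) : ℕ :=
  sInf {n | ∃ u v : V, u ≠ v ∧ n = lam G u v}

/-- The upper edge-connectivity `λ⁺(G)`. -/
noncomputable def upperEdgeConn (G : SimpleGraph V) : ℕ :=
  sSup {n | ∃ u v : V, u ≠ v ∧ n = lam G u v}

/-- A rainbow disconnection coloring of `G` with `k` colors. -/
def IsRDColoring (G : SimpleGraph V) {k : ℕ} (c : Sym2 V → Fin k) : Prop :=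
  ∀ u v : V, u ≠ v → ∃ C : Finset (Sym2 V), IsEdgeCut G C u v ∧ Set.InjOn c ↑C

/-- The rainbow disconnection number `rd(G)`. -/
noncomputable def rd (G : SimpleGraph V) : ℕ :=
  sInf {k | ∃ c : Sym2 V → Fin k, IsRDColoring G c}

/-- A proper edge-coloring of `G` with `k` colors. -/
def IsProperEdgeColoring (G : SimpleGraph V) {k : ℕ} (c : Sym2 V → Fin k) : Prop :=
  ∀ e₁ ∈ G.edgeSet, ∀ e₂ ∈ G.edgeSet, e₁ ≠ e₂ → (∃ x, x ∈ e₁ ∧ x ∈ e₂) → c e₁ ≠ c e₂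

/-- The chromatic index `χ'(G)`. -/
noncomputable def chromIndex (G : SimpleGraph V) : ℕ :=
  sInf {k | ∃ c : Sym2 V → Fin k, IsProperEdgeColoring G c}

/-- The degree of a vertex. -/
noncomputable def deg (G : SimpleGraph V) (v : V) : ℕ := (G.neighborSet v).ncard

/-- The maximum degree `Δ(G)`. -/
noncomputable def maxDeg (G : SimpleGraph V) : ℕ := sSup (Set.range (deg G))

/-- The minimum degree `δ(G)`. -/
noncomputable def minDeg (G : SimpleGraph V) : ℕ := sInf (Set.range (deg G))

/-- `S` is an `x`-`y`-vertex-cut of `H` (in the sense of rainbow vertex-disconnection). -/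
def IsVertexCut (H : SimpleGraph V) (x y : V) (S : Finset V) : Prop :=
  x ∉ S ∧ y ∉ S ∧
  (H.Adj x y → ∀ p : (H.deleteEdges {s(x, y)}).Walk x y, ∃ w ∈ p.support, w ∈ S) ∧
  (¬ H.Adj x y → ∀ p : H.Walk x y, ∃ w ∈ p.support, w ∈ S)

/-- A rainbow vertex-disconnection coloring of `H` with `k` colors. -/
def IsRVDColoring (H : SimpleGraph V) {k : ℕ} (c : V → Fin k) : Prop :=
  ∀ x y : V, x ≠ y → ∃ S : Finset V, IsVertexCut H x y S ∧
    (H.Adj x y → Set.InjOn c (insert x ↑S) ∨ Set.InjOn c (insert y ↑S)) ∧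
    (¬ H.Adj x y → Set.InjOn c ↑S)

/-- The rainbow vertex-disconnection number `rvd(H)`. -/
noncomputable def rvd (H : SimpleGraph V) : ℕ :=
  sInf {k | ∃ c : V → Fin k, IsRVDColoring H c}

end RD

/-!
A `u`-`v`-walk in `G` through the edges `e₁, …, eₙ` yields the walk `e, e₁, …, eₙ, f` in `L(G)`
for any edges `e ∋ u` and `f ∋ v`. So if `u` has an edge `e` avoiding `v` and `v` has an edge `f`
avoiding `u`, a rainbow `e`-`f`-vertex-cut `S` of `L(G)`, together with `e` or `f` when these are
adjacent in `L(G)`, is a rainbow `u`-`v`-edge-cut of `G` for the same coloring. Otherwise, say,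
every edge at `u` is `uv`, and these edges form a cut with at most one element. Since `L(G)` is
finite, `rvd(L(G))` is attained, and an optimal vertex coloring of `L(G)` is an edge coloring of
`G` witnessing `rd(G) ≤ rvd(L(G))`.
-/

namespace RD

variable {V : Type*} {G : SimpleGraph V}

lemma IsEdgeCut.symm {C : Finset (Sym2 V)} {u v : V} (h : IsEdgeCut G C u v) :
    IsEdgeCut G C v u :=
  ⟨h.1, fun hr => h.2 hr.symm⟩

lemma IsVertexCut.symm {W : Type*} {H : SimpleGraph W} {x y : W} {S : Finset W}
    (h : IsVertexCut H x y S) : IsVertexCut H y x S := by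
  obtain ⟨hx, hy, hadj, hnadj⟩ := h
  refine ⟨hy, hx, fun hyx p => ?_, fun hyx p => ?_⟩
  · have hcut : ∀ r : (H.deleteEdges {s(y, x)}).Walk x y, ∃ w ∈ r.support, w ∈ S := by
      rw [Sym2.eq_swap]
      exact hadj hyx.symm
    obtain ⟨w, hw, hwS⟩ := hcut p.reverse
    exact ⟨w, by simpa using hw, hwS⟩
  · obtain ⟨w, hw, hwS⟩ := hnadj (fun hxy => hyx hxy.symm) p.reverse
    exact ⟨w, by simpa using hw, hwS⟩

lemma exists_mem_support_sdiff_of_not_adj {W : Type*} [Fintype W] [DecidableEq W]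
    {H : SimpleGraph W} {x y : W} (hxy : x ≠ y) (hn : ¬ H.Adj x y) (p : H.Walk x y) :
    ∃ w ∈ p.support, w ∈ Finset.univ \ {x, y} := by
  cases p with
  | nil => exact absurd rfl hxy
  | @cons _ z _ hxz q =>
    refine ⟨z, List.mem_cons_of_mem _ q.start_mem_support, ?_⟩
    simp only [Finset.mem_sdiff, Finset.mem_univ, Finset.mem_insert, Finset.mem_singleton,
      true_and, not_or]
    exact ⟨hxz.ne.symm, by rintro rfl; exact hn hxz⟩

lemma isRVDColoring_of_injective {W : Type*} [Fintype W] (H : SimpleGraph W) {k : ℕ}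
    {c : W → Fin k} (hc : Function.Injective c) : IsRVDColoring H c := by
  classical
  intro x y hxy
  refine ⟨Finset.univ \ {x, y}, ⟨by simp, by simp, fun _ p => ?_, fun hn p => ?_⟩,
    fun _ => Or.inl hc.injOn, fun _ => hc.injOn⟩
  · exact exists_mem_support_sdiff_of_not_adj hxy (by simp [deleteEdges_adj]) p
  · exact exists_mem_support_sdiff_of_not_adj hxy hn p

lemma exists_lineGraph_walk {a b : V} (p : G.Walk a b) {g f : G.edgeSet}
    (hg : a ∈ (g : Sym2 V)) (hf : b ∈ (f : Sym2 V)) :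
    ∃ q : G.lineGraph.Walk g f, ∀ x ∈ q.support, x = g ∨ x = f ∨ (x : Sym2 V) ∈ p.edges := by
  induction p generalizing g with
  | nil =>
    by_cases hgf : g = f
    · subst hgf
      exact ⟨.nil, by simp⟩
    · exact ⟨.cons (lineGraph_adj_iff_exists.mpr ⟨hgf, _, hg, hf⟩) .nil, by simp⟩
  | @cons a c b hac p ih =>
    obtain ⟨q, hq⟩ := ih (g := ⟨s(a, c), hac⟩) (Sym2.mem_mk_right a c) hf
    have hq' : ∀ x ∈ q.support, x = f ∨ (x : Sym2 V) ∈ (Walk.cons hac p).edges := by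
      intro x hx
      rcases hq x hx with rfl | rfl | hx
      · simp
      · exact .inl rfl
      · simp [hx]
    by_cases hgh : g = ⟨s(a, c), hac⟩
    · subst hgh
      exact ⟨q, fun x hx => .inr (hq' x hx)⟩
    · refine ⟨.cons (lineGraph_adj_iff_exists.mpr ⟨hgh, a, hg, Sym2.mem_mk_left a c⟩) q, ?_⟩
      intro x hx
      rcases List.mem_cons.mp hx with rfl | hx
      · exact .inl rfl
      · exact .inr (hq' x hx)

/-- The first edge `h` of `p` is neither `e` nor (as `u ∉ f`) `f`, so prefixing `e` to a walk
from `h` to `f` through the edges of `p` avoids the edge `ef` of `L(G)`. -/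
lemma exists_lineGraph_deleteEdges_walk {u v : V} (p : G.Walk u v) (huv : u ≠ v)
    {e f : G.edgeSet} (hu : u ∈ (e : Sym2 V)) (hv : v ∈ (f : Sym2 V)) (huf : u ∉ (f : Sym2 V))
    (hep : (e : Sym2 V) ∉ p.edges) :
    ∃ q : (G.lineGraph.deleteEdges {s(e, f)}).Walk e f,
      ∀ x ∈ q.support, x = e ∨ x = f ∨ (x : Sym2 V) ∈ p.edges := by
  cases p with
  | nil => exact absurd rfl huv
  | @cons _ a _ hua p =>
    set h : G.edgeSet := ⟨s(u, a), hua⟩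
    obtain ⟨q, hq⟩ := exists_lineGraph_walk p (g := h) (Sym2.mem_mk_right u a) hv
    have heh : e ≠ h := by
      rintro rfl
      exact hep (by simp [h])
    have hhf : h ≠ f := fun hhf => huf (hhf ▸ Sym2.mem_mk_left u a)
    have hef : e ≠ f := fun hef => huf (hef ▸ hu)
    have he_q : e ∉ q.support := by
      intro he
      rcases hq e he with heh' | hef' | hep'
      · exact heh heh'
      · exact hef hef'
      · exact hep (by simp [hep'])
    let q' := q.toDeleteEdges {s(e, f)} fun d hd hdef =>
      he_q (q.fst_mem_support_of_mem_edges (Set.mem_singleton_iff.mp hdef ▸ hd))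
    have hadj : (G.lineGraph.deleteEdges {s(e, f)}).Adj e h := by
      refine deleteEdges_adj.mpr ⟨lineGraph_adj_iff_exists.mpr ⟨heh, u, hu, ?_⟩, by simp [hhf, hef]⟩
      exact Sym2.mem_mk_left u a
    refine ⟨.cons hadj q', fun x hx => ?_⟩
    rcases List.mem_cons.mp hx with rfl | hx
    · exact .inl rfl
    · rcases hq x (by simpa [q'] using hx) with rfl | rfl | hx
      · simp [h]
      · exact .inr (.inl rfl)
      · simp [hx]

lemma isEdgeCut_map_subtype {u v : V} (huv : u ≠ v) {e f : G.edgeSet}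
    (hu : u ∈ (e : Sym2 V)) (hv : v ∈ (f : Sym2 V)) (huf : u ∉ (f : Sym2 V))
    {S T : Finset G.edgeSet} (hS : IsVertexCut G.lineGraph e f S) (hST : S ⊆ T)
    (heT : G.lineGraph.Adj e f → e ∈ T) :
    IsEdgeCut G (T.map (Function.Embedding.subtype _)) u v := by
  refine ⟨by rw [Finset.coe_map]; rintro _ ⟨x, -, rfl⟩; exact x.2, ?_⟩
  rintro ⟨p⟩
  set p' : G.Walk u v := p.mapLe (G.deleteEdges_le _)
  have hp' : ∀ x ∈ T, (x : Sym2 V) ∉ p'.edges := by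
    intro x hx hmem
    have := p.edges_subset_edgeSet (by simpa [p', Walk.edges_mapLe_eq_edges] using hmem)
    simp [edgeSet_deleteEdges, hx] at this
  have hS_walk : ∀ {H : SimpleGraph G.edgeSet} (q : H.Walk e f),
      (∀ x ∈ q.support, x = e ∨ x = f ∨ (x : Sym2 V) ∈ p'.edges) →
      (∃ w ∈ q.support, w ∈ S) → False := by
    rintro H q hq ⟨w, hw, hwS⟩
    rcases hq w hw with rfl | rfl | hwp
    · exact hS.1 hwS
    · exact hS.2.1 hwS
    · exact hp' w (hST hwS) hwp
  by_cases hef : G.lineGraph.Adj e f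
  · obtain ⟨q, hq⟩ := exists_lineGraph_deleteEdges_walk p' huv hu hv huf (hp' e (heT hef))
    exact hS_walk q hq (hS.2.2.1 hef q)
  · obtain ⟨q, hq⟩ := exists_lineGraph_walk p' hu hv
    exact hS_walk q hq (hS.2.2.2 hef q)

lemma exists_subsingleton_isEdgeCut {u v : V} (huv : u ≠ v) (hu : ∀ a, G.Adj u a → a = v) :
    ∃ C : Finset (Sym2 V), IsEdgeCut G C u v ∧ (C : Set (Sym2 V)).Subsingleton := by
  classical
  refine ⟨if G.Adj u v then {s(u, v)} else ∅, ⟨?_, ?_⟩, ?_⟩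
  · split_ifs with h <;> simp [h]
  · rintro ⟨p⟩
    cases p with
    | nil => exact huv rfl
    | @cons _ a _ hua p =>
      obtain ⟨hua', hC⟩ := deleteEdges_adj.mp hua
      obtain rfl := hu a hua'
      simp [hua'] at hC
  · split_ifs <;> simp

theorem IsRVDColoring.isRDColoring_extend {k : ℕ} {c : G.edgeSet → Fin k}
    (hc : IsRVDColoring G.lineGraph c) (d : Sym2 V → Fin k) :
    IsRDColoring G (Function.extend Subtype.val c d) := by
  classical
  have rainbow : ∀ T : Finset G.edgeSet, Set.InjOn c T →
      Set.InjOn (Function.extend Subtype.val c d) ↑(T.map (Function.Embedding.subtype _)) := by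
    intro T hT
    rw [Finset.coe_map, Function.Embedding.coe_subtype]
    exact Set.InjOn.image_of_comp (by rwa [Function.extend_comp Subtype.val_injective])
  intro u v huv
  by_cases hu : ∀ a, G.Adj u a → a = v
  · obtain ⟨C, hC, hsub⟩ := exists_subsingleton_isEdgeCut huv hu
    exact ⟨C, hC, hsub.injOn _⟩
  by_cases hv : ∀ b, G.Adj v b → b = u
  · obtain ⟨C, hC, hsub⟩ := exists_subsingleton_isEdgeCut huv.symm hv
    exact ⟨C, hC.symm, hsub.injOn _⟩
  push Not at hu hv
  obtain ⟨a, hua, hav⟩ := hu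
  obtain ⟨b, hvb, hbu⟩ := hv
  set e : G.edgeSet := ⟨s(u, a), hua⟩
  set f : G.edgeSet := ⟨s(v, b), hvb⟩
  have hue : u ∈ (e : Sym2 V) := Sym2.mem_mk_left u a
  have hvf : v ∈ (f : Sym2 V) := Sym2.mem_mk_left v b
  have huf : u ∉ (f : Sym2 V) := by simp [f, huv, hbu.symm]
  have hve : v ∉ (e : Sym2 V) := by simp [e, huv.symm, hav.symm]
  obtain ⟨S, hS, hadj, hnadj⟩ := hc e f fun hef => huf (hef ▸ hue)
  by_cases hef : G.lineGraph.Adj e f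
  · rcases hadj hef with he | hf
    · exact ⟨_, isEdgeCut_map_subtype huv hue hvf huf hS (S.subset_insert e)
        fun _ => S.mem_insert_self e, rainbow _ (by rwa [Finset.coe_insert])⟩
    · exact ⟨_, (isEdgeCut_map_subtype huv.symm hvf hue hve hS.symm (S.subset_insert f)
        fun _ => S.mem_insert_self f).symm, rainbow _ (by rwa [Finset.coe_insert])⟩
  · exact ⟨_, isEdgeCut_map_subtype huv hue hvf huf hS subset_rfl (absurd · hef),
      rainbow S (hnadj hef)⟩

theorem rd_le_rvd_lineGraph (hfin : G.edgeSet.Finite) (hne : G.edgeSet.Nonempty) :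
    rd G ≤ rvd G.lineGraph := by
  obtain ⟨e₀⟩ := hne.to_subtype
  have := hfin.fintype
  have hcolorable : {k | ∃ c : G.edgeSet → Fin k, IsRVDColoring G.lineGraph c}.Nonempty :=
    ⟨_, _, isRVDColoring_of_injective G.lineGraph (Fintype.equivFin _).injective⟩
  obtain ⟨c, hc⟩ := Nat.sInf_mem hcolorable
  exact Nat.sInf_le ⟨_, hc.isRDColoring_extend fun _ => c e₀⟩

end RD

theorem stmt16_general {V : Type*} (G : SimpleGraph V)
    (h : 2 ≤ G.edgeSet.ncard) :
    RD.rd G ≤ RD.rvd G.lineGraph :=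
  RD.rd_le_rvd_lineGraph (Set.finite_of_ncard_pos (by omega))
    (Set.nonempty_of_ncard_ne_zero (by omega))

theorem stmt16 {V : Type*} (G : SimpleGraph V) (hconn : G.Connected)
    (h : 2 ≤ G.edgeSet.ncard) :
    RD.rd G ≤ RD.rvd G.lineGraph :=
  stmt16_general G h
end

section
/- Let G be a connected graph with minimum degree δ(G) ≥ 4 and L(G) its line graph. If rd(G) = rvd(L(G)), then rd(G) = χ'(G). -/
open SimpleGraph

section Aux

open RD SimpleGraph

variable {V : Type*}

lemma RDaux.deg_ge (G : SimpleGraph V) (hdelta : 4 ≤ RD.minDeg G) (v : V) :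
    4 ≤ (G.neighborSet v).ncard :=
  le_trans hdelta (Nat.sInf_le ⟨v, rfl⟩)

lemma RDaux.nbr_finite (G : SimpleGraph V) (hdelta : 4 ≤ RD.minDeg G) (v : V) :
    (G.neighborSet v).Finite := by
  by_contra hinf
  have h0 : (G.neighborSet v).ncard = 0 := Set.Infinite.ncard hinf
  have := RDaux.deg_ge G hdelta v
  omega

lemma RDaux.proper_to_rd (G : SimpleGraph V) (hdelta : 4 ≤ RD.minDeg G) {k : ℕ}
    (c : Sym2 V → Fin k) (hc : RD.IsProperEdgeColoring G c) : RD.IsRDColoring G c := by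
  classical
  intro u v huv
  have hfin := RDaux.nbr_finite G hdelta u
  refine ⟨hfin.toFinset.image (fun w => s(u, w)), ⟨?_, ?_⟩, ?_⟩
  · intro e he
    simp only [Finset.coe_image, Set.mem_image, Finset.mem_coe, Set.Finite.mem_toFinset,
      Set.Finite.coe_toFinset] at he
    obtain ⟨w, hw, rfl⟩ := he
    exact hw
  · rintro ⟨p⟩
    cases p with
    | nil => exact huv rfl
    | @cons _ b _ ha _ =>
      rw [SimpleGraph.deleteEdges_adj] at ha
      refine ha.2 ?_
      simp only [Finset.coe_image, Set.mem_image, Finset.mem_coe, Set.Finite.coe_toFinset]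
      exact ⟨b, ha.1, rfl⟩
  · intro e₁ h1 e₂ h2 hcc
    simp only [Finset.coe_image, Set.mem_image, Finset.mem_coe, Set.Finite.coe_toFinset] at h1 h2
    obtain ⟨w₁, hw₁, rfl⟩ := h1
    obtain ⟨w₂, hw₂, rfl⟩ := h2
    by_contra hne
    exact hc _ hw₁ _ hw₂ hne ⟨u, Sym2.mem_mk_left u w₁, Sym2.mem_mk_left u w₂⟩ hcc

lemma RDaux.rvd_to_proper (G : SimpleGraph V) (hdelta : 4 ≤ RD.minDeg G) {k : ℕ}
    (c : G.edgeSet → Fin k) (hc : RD.IsRVDColoring G.lineGraph c)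
    (e₀ : Sym2 V) (he₀ : e₀ ∈ G.edgeSet) :
    ∃ c' : Sym2 V → Fin k, RD.IsProperEdgeColoring G c' := by
  classical
  -- key claim : c, as a vertex coloring of the line graph, separates incident edges
  have key : ∀ (e₁ : G.edgeSet) (e₂ : G.edgeSet), e₁ ≠ e₂ →
      (∀ x : V, x ∈ (e₁ : Sym2 V) → x ∈ (e₂ : Sym2 V) → c e₁ ≠ c e₂) := by
    rintro e₁ e₂ hne x hx1 hx2
    obtain ⟨a, ha⟩ := Sym2.mem_iff_exists.mp hx1
    obtain ⟨b, hb⟩ := Sym2.mem_iff_exists.mp hx2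
    have hadj_a : G.Adj x a := by
      have := e₁.2; rw [ha] at this; exact this
    have hadj_b : G.Adj x b := by
      have := e₂.2; rw [hb] at this; exact this
    have hab : a ≠ b := by
      intro hab; apply hne; apply Subtype.ext; rw [ha, hb, hab]
    -- pick two more neighbors g, h of x
    have hfin := RDaux.nbr_finite G hdelta x
    have hcard : 4 ≤ hfin.toFinset.card := by
      rw [← Set.ncard_eq_toFinset_card _ hfin]
      exact RDaux.deg_ge G hdelta x
    have hcard2 : 1 < (hfin.toFinset \ {a, b}).card := by
      have h1 := Finset.le_card_sdiff ({a, b} : Finset V) hfin.toFinset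
      have h2 : ({a, b} : Finset V).card ≤ 2 := Finset.card_insert_le _ _ |>.trans (by simp)
      omega
    obtain ⟨g, hg, h', hh', hgh⟩ := Finset.one_lt_card.mp hcard2
    simp only [Finset.mem_sdiff, Set.Finite.mem_toFinset, SimpleGraph.mem_neighborSet,
      Finset.mem_insert, Finset.mem_singleton, not_or] at hg hh'
    obtain ⟨hgadj, hga, hgb⟩ := hg
    obtain ⟨hhadj, hha, hhb⟩ := hh'
    -- the four line-graph vertices
    set vg : G.edgeSet := ⟨s(x, g), hgadj⟩ with hvg
    set vh : G.edgeSet := ⟨s(x, h'), hhadj⟩ with hvh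
    have hne_e1_vg : e₁ ≠ vg := by
      intro hh; apply hga; have := congrArg Subtype.val hh
      rw [ha] at this; exact (Sym2.congr_right.mp this).symm
    have hne_e1_vh : e₁ ≠ vh := by
      intro hh; apply hha; have := congrArg Subtype.val hh
      rw [ha] at this; exact (Sym2.congr_right.mp this).symm
    have hne_e2_vg : e₂ ≠ vg := by
      intro hh; apply hgb; have := congrArg Subtype.val hh
      rw [hb] at this; exact (Sym2.congr_right.mp this).symm
    have hne_e2_vh : e₂ ≠ vh := by
      intro hh; apply hhb; have := congrArg Subtype.val hh
      rw [hb] at this; exact (Sym2.congr_right.mp this).symm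
    have hne_gh : vg ≠ vh := by
      intro hh; apply hgh; have := congrArg Subtype.val hh
      exact Sym2.congr_right.mp this
    have hadj_gh : G.lineGraph.Adj vg vh :=
      SimpleGraph.lineGraph_adj_iff_exists.mpr
        ⟨hne_gh, x, Sym2.mem_mk_left x g, Sym2.mem_mk_left x h'⟩
    obtain ⟨S, ⟨hgS, hhS, hcut, -⟩, hrain, -⟩ := hc vg vh hne_gh
    -- both e₁ and e₂ are in the cut S
    have hmem : ∀ (e : G.edgeSet), e ≠ vg → e ≠ vh → x ∈ (e : Sym2 V) → e ∈ S := by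
      intro e hevg hevh hxe
      have adj1 : (G.lineGraph.deleteEdges {s(vg, vh)}).Adj vg e := by
        rw [SimpleGraph.deleteEdges_adj]
        constructor
        · exact SimpleGraph.lineGraph_adj_iff_exists.mpr
            ⟨(Ne.symm hevg), x, Sym2.mem_mk_left x g, hxe⟩
        · intro hq
          rw [Set.mem_singleton_iff, Sym2.eq_iff] at hq
          rcases hq with ⟨-, h2⟩ | ⟨h1, -⟩
          · exact hevh h2
          · exact hne_gh h1
      have adj2 : (G.lineGraph.deleteEdges {s(vg, vh)}).Adj e vh := by
        rw [SimpleGraph.deleteEdges_adj]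
        constructor
        · exact SimpleGraph.lineGraph_adj_iff_exists.mpr
            ⟨hevh, x, hxe, Sym2.mem_mk_left x h'⟩
        · intro hq
          rw [Set.mem_singleton_iff, Sym2.eq_iff] at hq
          rcases hq with ⟨h1, -⟩ | ⟨h1, -⟩
          · exact hevg h1
          · exact hevh h1
      obtain ⟨w, hwsup, hwS⟩ := hcut hadj_gh
        (SimpleGraph.Walk.cons adj1 (SimpleGraph.Walk.cons adj2 SimpleGraph.Walk.nil))
      rw [SimpleGraph.Walk.support_cons, SimpleGraph.Walk.support_cons,
        SimpleGraph.Walk.support_nil] at hwsup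
      simp only [List.mem_cons, List.mem_singleton, List.not_mem_nil, or_false] at hwsup
      rcases hwsup with rfl | rfl | rfl
      · exact absurd hwS hgS
      · exact hwS
      · exact absurd hwS hhS
    have he1S : e₁ ∈ S := hmem e₁ hne_e1_vg hne_e1_vh (by rw [ha]; exact Sym2.mem_mk_left x a)
    have he2S : e₂ ∈ S := hmem e₂ hne_e2_vg hne_e2_vh (by rw [hb]; exact Sym2.mem_mk_left x b)
    rcases hrain hadj_gh with hinj | hinj
    · intro hcc
      exact hne (hinj (Set.mem_insert_of_mem _ he1S) (Set.mem_insert_of_mem _ he2S) hcc)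
    · intro hcc
      exact hne (hinj (Set.mem_insert_of_mem _ he1S) (Set.mem_insert_of_mem _ he2S) hcc)
  refine ⟨fun e => if h : e ∈ G.edgeSet then c ⟨e, h⟩ else c ⟨e₀, he₀⟩, ?_⟩
  rintro e₁ he₁ e₂ he₂ hne ⟨x, hx1, hx2⟩
  simp only [dif_pos he₁, dif_pos he₂]
  exact key ⟨e₁, he₁⟩ ⟨e₂, he₂⟩ (fun hh => hne (congrArg Subtype.val hh)) x hx1 hx2

end Aux

theorem stmt17 {V : Type*} (G : SimpleGraph V) (hconn : G.Connected)
    (hdelta : 4 ≤ RD.minDeg G) (h : RD.rd G = RD.rvd G.lineGraph) :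
    RD.rd G = RD.chromIndex G := by
  classical
  obtain ⟨v₀⟩ := hconn.nonempty
  have hdeg := RDaux.deg_ge G hdelta v₀
  have hnn : (G.neighborSet v₀).Nonempty := Set.nonempty_of_ncard_ne_zero (by omega)
  obtain ⟨w₀, hw₀⟩ := hnn
  have he₀ : s(v₀, w₀) ∈ G.edgeSet := hw₀
  have hAR : {k | ∃ c : Sym2 V → Fin k, RD.IsProperEdgeColoring G c} ⊆
      {k | ∃ c : Sym2 V → Fin k, RD.IsRDColoring G c} := by
    rintro k ⟨c, hc⟩
    exact ⟨c, RDaux.proper_to_rd G hdelta c hc⟩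
  have hWA : {k | ∃ c : ↥G.edgeSet → Fin k, RD.IsRVDColoring G.lineGraph c} ⊆
      {k | ∃ c : Sym2 V → Fin k, RD.IsProperEdgeColoring G c} := by
    rintro k ⟨c, hc⟩
    exact RDaux.rvd_to_proper G hdelta c hc _ he₀
  by_cases hW : {k | ∃ c : ↥G.edgeSet → Fin k, RD.IsRVDColoring G.lineGraph c}.Nonempty
  · have h1 : RD.rvd G.lineGraph ∈
        {k | ∃ c : ↥G.edgeSet → Fin k, RD.IsRVDColoring G.lineGraph c} := Nat.sInf_mem hW
    have hA : {k | ∃ c : Sym2 V → Fin k, RD.IsProperEdgeColoring G c}.Nonempty := ⟨_, hWA h1⟩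
    have h2 : RD.chromIndex G ∈
        {k | ∃ c : Sym2 V → Fin k, RD.IsProperEdgeColoring G c} := Nat.sInf_mem hA
    have hca : RD.chromIndex G ≤ RD.rvd G.lineGraph := Nat.sInf_le (hWA h1)
    have hrc : RD.rd G ≤ RD.chromIndex G := Nat.sInf_le (hAR h2)
    omega
  · have hWe : {k | ∃ c : ↥G.edgeSet → Fin k, RD.IsRVDColoring G.lineGraph c} = ∅ :=
      Set.not_nonempty_iff_eq_empty.mp hW
    have hrvd0 : RD.rvd G.lineGraph = 0 := by
      rw [RD.rvd, hWe, Nat.sInf_empty]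
    have hrd0 : RD.rd G = 0 := by rw [h, hrvd0]
    have hRe : {k | ∃ c : Sym2 V → Fin k, RD.IsRDColoring G c} = ∅ := by
      by_contra hR
      have hRn : {k | ∃ c : Sym2 V → Fin k, RD.IsRDColoring G c}.Nonempty :=
        Set.nonempty_iff_ne_empty.mpr hR
      have h0 : (0 : ℕ) ∈ {k | ∃ c : Sym2 V → Fin k, RD.IsRDColoring G c} := by
        have := Nat.sInf_mem hRn
        rwa [show sInf {k | ∃ c : Sym2 V → Fin k, RD.IsRDColoring G c} = RD.rd G from rfl,
          hrd0] at this
      obtain ⟨c, -⟩ := h0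
      exact (c s(v₀, w₀)).elim0
    have hAe : {k | ∃ c : Sym2 V → Fin k, RD.IsProperEdgeColoring G c} = ∅ :=
      Set.subset_empty_iff.mp (hRe ▸ hAR)
    rw [hrd0, RD.chromIndex, hAe, Nat.sInf_empty]
end

section
/- For every integer n ≥ 2, the rainbow vertex-disconnection number of the complete graph K_n equals n−1 if n ∈ {2,3} and equals n if n ≥ 4. -/
open SimpleGraph

section Helpers

open SimpleGraph Finset

lemma cutA {n : ℕ} {x y : Fin n} (hxy : x ≠ y) :
    RD.IsVertexCut (⊤ : SimpleGraph (Fin n)) x y (Finset.univ \ {x, y}) := by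
  refine ⟨by simp, by simp, ?_, ?_⟩
  · intro _ p
    cases p with
    | nil => exact absurd rfl hxy
    | @cons _ w _ h q =>
      rw [SimpleGraph.deleteEdges_adj] at h
      obtain ⟨hadj, hne⟩ := h
      have hwx : w ≠ x := ((SimpleGraph.top_adj _ _).mp hadj).symm
      have hwy : w ≠ y := by
        rintro rfl
        exact hne rfl
      refine ⟨w, ?_, by simp [hwx, hwy]⟩
      rw [SimpleGraph.Walk.support_cons]
      exact List.mem_cons_of_mem _ q.start_mem_support
  · intro h; exact absurd ((SimpleGraph.top_adj _ _).mpr hxy) h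

lemma cutB {n : ℕ} {x y : Fin n} (hxy : x ≠ y) {S : Finset (Fin n)}
    (h : RD.IsVertexCut (⊤ : SimpleGraph (Fin n)) x y S) {z : Fin n}
    (hzx : z ≠ x) (hzy : z ≠ y) : z ∈ S := by
  obtain ⟨hxS, hyS, hadj, -⟩ := h
  have h1 : ((⊤ : SimpleGraph (Fin n)).deleteEdges {s(x, y)}).Adj x z := by
    rw [SimpleGraph.deleteEdges_adj]
    refine ⟨(SimpleGraph.top_adj _ _).mpr hzx.symm, ?_⟩
    intro hmem
    rw [Set.mem_singleton_iff, Sym2.eq_iff] at hmem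
    rcases hmem with ⟨-, h2⟩ | ⟨h1, -⟩
    · exact hzy h2
    · exact hxy h1
  have h2 : ((⊤ : SimpleGraph (Fin n)).deleteEdges {s(x, y)}).Adj z y := by
    rw [SimpleGraph.deleteEdges_adj]
    refine ⟨(SimpleGraph.top_adj _ _).mpr hzy, ?_⟩
    intro hmem
    rw [Set.mem_singleton_iff, Sym2.eq_iff] at hmem
    rcases hmem with ⟨h3, -⟩ | ⟨h3, h4⟩
    · exact hzx h3
    · exact hxy h4.symm
  obtain ⟨w, hw, hwS⟩ := hadj ((SimpleGraph.top_adj _ _).mpr hxy)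
    (SimpleGraph.Walk.cons h1 (SimpleGraph.Walk.cons h2 SimpleGraph.Walk.nil))
  simp [SimpleGraph.Walk.support_cons] at hw
  rcases hw with rfl | rfl | rfl
  · exact absurd hwS hxS
  · exact hwS
  · exact absurd hwS hyS

lemma injOn_insert_coe {n k : ℕ} {c : Fin n → Fin k} {x : Fin n} {S : Finset (Fin n)}
    (h : ∀ a ∈ insert x S, ∀ b ∈ insert x S, c a = c b → a = b) :
    Set.InjOn c (insert x ↑S) := by
  rw [← Finset.coe_insert]
  intro a ha b hb
  exact h a (by exact_mod_cast ha) b (by exact_mod_cast hb)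

lemma witness_id {n : ℕ} : RD.IsRVDColoring (⊤ : SimpleGraph (Fin n)) (id : Fin n → Fin n) := by
  intro x y hxy
  exact ⟨Finset.univ \ {x, y}, cutA hxy, fun _ => Or.inl Function.injective_id.injOn,
    fun _ => Function.injective_id.injOn⟩

lemma witness2 : RD.IsRVDColoring (⊤ : SimpleGraph (Fin 2)) (fun _ => (0 : Fin 1)) := by
  intro x y hxy
  refine ⟨Finset.univ \ {x, y}, cutA hxy, fun _ => ?_,
    fun h => absurd ((SimpleGraph.top_adj _ _).mpr hxy) h⟩
  have hS : ∀ x y : Fin 2, x ≠ y → (Finset.univ \ {x, y} : Finset (Fin 2)) = ∅ := by decide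
  left
  rw [hS x y hxy]
  simp

lemma witness3 : RD.IsRVDColoring (⊤ : SimpleGraph (Fin 3)) (![0, 1, 0] : Fin 3 → Fin 2) := by
  intro x y hxy
  refine ⟨Finset.univ \ {x, y}, cutA hxy, fun _ => ?_,
    fun h => absurd ((SimpleGraph.top_adj _ _).mpr hxy) h⟩
  have key : ∀ x y : Fin 3, x ≠ y →
      (∀ a ∈ insert x (Finset.univ \ {x, y}), ∀ b ∈ insert x (Finset.univ \ {x, y}),
        (![0, 1, 0] : Fin 3 → Fin 2) a = ![0, 1, 0] b → a = b) ∨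
      (∀ a ∈ insert y (Finset.univ \ {x, y}), ∀ b ∈ insert y (Finset.univ \ {x, y}),
        (![0, 1, 0] : Fin 3 → Fin 2) a = ![0, 1, 0] b → a = b) := by decide
  rcases key x y hxy with h | h
  · exact Or.inl (injOn_insert_coe h)
  · exact Or.inr (injOn_insert_coe h)

end Helpers

theorem stmt18 (n : ℕ) (hn : 2 ≤ n) :
    ((n = 2 ∨ n = 3) → RD.rvd (⊤ : SimpleGraph (Fin n)) = n - 1) ∧
    (4 ≤ n → RD.rvd (⊤ : SimpleGraph (Fin n)) = n) := by
  constructor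
  · rintro (rfl | rfl)
    · show RD.rvd (⊤ : SimpleGraph (Fin 2)) = 1
      apply le_antisymm
      · exact Nat.sInf_le ⟨fun _ => (0 : Fin 1), witness2⟩
      · apply le_csInf
        · exact ⟨1, ⟨fun _ => (0 : Fin 1), witness2⟩⟩
        rintro k ⟨c, -⟩
        exact (c 0).pos
    · show RD.rvd (⊤ : SimpleGraph (Fin 3)) = 2
      apply le_antisymm
      · exact Nat.sInf_le ⟨(![0, 1, 0] : Fin 3 → Fin 2), witness3⟩
      · apply le_csInf
        · exact ⟨2, ⟨(![0, 1, 0] : Fin 3 → Fin 2), witness3⟩⟩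
        rintro k ⟨c, hc⟩
        by_contra hlt
        push_neg at hlt
        have hk0 : 0 < k := (c 0).pos
        have hk1 : k = 1 := by omega
        subst hk1
        obtain ⟨S, hcut, hio, -⟩ := hc 0 1 (by decide)
        have h2S : (2 : Fin 3) ∈ S := cutB (by decide) hcut (by decide) (by decide)
        rcases hio ((SimpleGraph.top_adj _ _).mpr (by decide)) with h | h
        · have := h (Set.mem_insert _ _)
            (Set.mem_insert_of_mem _ (Finset.mem_coe.mpr h2S)) (Subsingleton.elim _ _)
          exact absurd this (by decide)
        · have := h (Set.mem_insert _ _)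
            (Set.mem_insert_of_mem _ (Finset.mem_coe.mpr h2S)) (Subsingleton.elim _ _)
          exact absurd this (by decide)
  · intro h4
    apply le_antisymm
    · exact Nat.sInf_le ⟨(id : Fin n → Fin n), witness_id⟩
    · apply le_csInf
      · exact ⟨n, ⟨(id : Fin n → Fin n), witness_id⟩⟩
      rintro k ⟨c, hc⟩
      have hinj : Function.Injective c := by
        intro u v huv
        by_contra hne
        have hcard : 1 < (Finset.univ \ {u, v} : Finset (Fin n)).card := by
          rw [Finset.card_sdiff_of_subset (Finset.subset_univ _), Finset.card_univ, Fintype.card_fin,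
            Finset.card_pair hne]
          omega
        obtain ⟨a, ha, b, hb, hab⟩ := Finset.one_lt_card.mp hcard
        simp only [Finset.mem_sdiff, Finset.mem_univ, Finset.mem_insert, Finset.mem_singleton,
          true_and] at ha hb
        push_neg at ha hb
        obtain ⟨S, hcut, hio, -⟩ := hc a b hab
        have huS : u ∈ S := cutB hab hcut (Ne.symm ha.1) (Ne.symm hb.1)
        have hvS : v ∈ S := cutB hab hcut (Ne.symm ha.2) (Ne.symm hb.2)
        rcases hio ((SimpleGraph.top_adj _ _).mpr hab) with h | h
        · exact hne (h (Set.mem_insert_of_mem _ (Finset.mem_coe.mpr huS))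
            (Set.mem_insert_of_mem _ (Finset.mem_coe.mpr hvS)) huv)
        · exact hne (h (Set.mem_insert_of_mem _ (Finset.mem_coe.mpr huS))
            (Set.mem_insert_of_mem _ (Finset.mem_coe.mpr hvS)) huv)
      have := Fintype.card_le_of_injective c hinj
      simpa using this
end
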